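/- arXiv:1106.1336 — 4 statements merged into one kernel-verified Lean document; each statement's English description precedes it below -/
import Mathlib

section
/- The graph G_3 has chromatic number exactly 4. -/
/-!
In a 3-colouring the triangle `xyz` uses all three colours, so each of `p`, `q`, `r`, being
adjacent to two triangle vertices, must repeat the colour of the third one. Hence `p`, `q`, `r`
carry all three colours and their common neighbour `w` has none left. A 4-colouring is easy.
-/

/-- `G₃`, the cube with one corner cut off: with vertices labelled
`x = 0, y = 1, z = 2, p = 3, q = 4, r = 5, w = 6`, its edges are
`xy, xz, yz, px, py, qx, qz, ry, rz, wp, wq, wr`. -/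
def G3 : SimpleGraph (Fin 7) :=
  SimpleGraph.fromEdgeSet
    {s(0, 1), s(0, 2), s(1, 2), s(3, 0), s(3, 1), s(4, 0), s(4, 2),
     s(5, 1), s(5, 2), s(6, 3), s(6, 4), s(6, 5)}

theorem eq_of_ne_of_ne_of_card_le_three {α : Type*} [Fintype α] (hα : Fintype.card α ≤ 3)
    {a b c d : α} (hab : a ≠ b) (hac : a ≠ c) (hbc : b ≠ c) (hda : d ≠ a) (hdb : d ≠ b) :
    d = c := by
  classical
  by_contra hdc
  have : ({a, b, c, d} : Finset α).card = 4 := by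
    rw [Finset.card_insert_of_notMem (by simp [hab, hac, hda.symm]),
      Finset.card_insert_of_notMem (by simp [hbc, hdb.symm]),
      Finset.card_pair (Ne.symm hdc)]
  have := Finset.card_le_univ ({a, b, c, d} : Finset α)
  omega

namespace SimpleGraph

variable {V α : Type*} {G : SimpleGraph V}

theorem Coloring.eq_of_adj_triangle [Fintype α] (C : G.Coloring α) (hα : Fintype.card α ≤ 3)
    {x y z p : V} (hxy : G.Adj x y) (hxz : G.Adj x z) (hyz : G.Adj y z)
    (hpx : G.Adj p x) (hpy : G.Adj p y) : C p = C z :=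
  eq_of_ne_of_ne_of_card_le_three hα (C.valid hxy) (C.valid hxz) (C.valid hyz)
    (C.valid hpx) (C.valid hpy)

theorem not_colorable_three_of_cutCube {x y z p q r w : V}
    (hxy : G.Adj x y) (hxz : G.Adj x z) (hyz : G.Adj y z)
    (hpx : G.Adj p x) (hpy : G.Adj p y) (hqx : G.Adj q x) (hqz : G.Adj q z)
    (hry : G.Adj r y) (hrz : G.Adj r z)
    (hwp : G.Adj w p) (hwq : G.Adj w q) (hwr : G.Adj w r) : ¬G.Colorable 3 := by
  rintro ⟨C⟩
  have hα : Fintype.card (Fin 3) ≤ 3 := by simp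
  have hp : C p = C z := C.eq_of_adj_triangle hα hxy hxz hyz hpx hpy
  have hq : C q = C y := C.eq_of_adj_triangle hα hxz hxy hyz.symm hqx hqz
  have hr : C r = C x := C.eq_of_adj_triangle hα hyz hxy.symm hxz.symm hry hrz
  have hw : C w = C x := eq_of_ne_of_ne_of_card_le_three hα (C.valid hyz) (C.valid hxy).symm
    (C.valid hxz).symm (hq ▸ C.valid hwq) (hp ▸ C.valid hwp)
  exact C.valid hwr (hw.trans hr.symm)

end SimpleGraph

instance : DecidableRel G3.Adj := fun a b => by
  unfold G3
  simp only [SimpleGraph.fromEdgeSet_adj, Set.mem_insert_iff, Set.mem_singleton_iff]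
  infer_instance

/-- The graph `G₃` has chromatic number exactly `4`. -/
theorem G3_chromaticNumber_eq_four : G3.chromaticNumber = 4 := by
  rw [show (4 : ℕ∞) = (3 : ℕ) + 1 from rfl,
    SimpleGraph.chromaticNumber_eq_iff_colorable_not_colorable]
  refine ⟨⟨.mk ![0, 1, 2, 2, 1, 0, 3] (by decide)⟩, ?_⟩
  apply SimpleGraph.not_colorable_three_of_cutCube (x := 0) (y := 1) (z := 2) (p := 3) (q := 4)
    (r := 5) (w := 6) <;> decide
end

section
/- The graph G_3 is 4-critical: G_3 has chromatic number 4, and for every edge e of G_3 the graph obtained by deleting e has chromatic number at most 3. -/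
namespace SimpleGraph

variable {V : Type*}

theorem colorable_fromEdgeSet_of_forall_ne {s : Set (Sym2 V)} {n : ℕ} (f : V → Fin n)
    (hf : ∀ v w, s(v, w) ∈ s → v ≠ w → f v ≠ f w) : (fromEdgeSet s).Colorable n :=
  ⟨Coloring.mk f fun h => hf _ _ h.1 h.2⟩

theorem fromEdgeSet_deleteEdges (s t : Set (Sym2 V)) :
    (fromEdgeSet s).deleteEdges t = fromEdgeSet (s \ t) :=
  (fromEdgeSet_sdiff s t).symm

end SimpleGraph

open SimpleGraph

theorem G3_colorable_four : G3.Colorable 4 :=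
  colorable_fromEdgeSet_of_forall_ne ![0, 1, 2, 2, 1, 0, 3] (by decide)

theorem G3_not_colorable_three : ¬ G3.Colorable 3 := by
  rintro ⟨C⟩
  have h (a b : Fin 7) (hab : G3.Adj a b) : C a ≠ C b := C.valid hab
  have third {a b c d : Fin 3} := @eq_of_ne_of_ne_of_card_le_three _ _ le_rfl a b c d
  have hxy := h 0 1 (by simp [G3])
  have hxz := h 0 2 (by simp [G3])
  have hyz := h 1 2 (by simp [G3])
  have hp : C 3 = C 2 := third hxy hxz hyz (h 3 0 (by simp [G3])) (h 3 1 (by simp [G3]))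
  have hq : C 4 = C 1 := third hxz hxy hyz.symm (h 4 0 (by simp [G3])) (h 4 2 (by simp [G3]))
  have hr : C 5 = C 0 := third hyz hxy.symm hxz.symm (h 5 1 (by simp [G3])) (h 5 2 (by simp [G3]))
  have hpq : C 3 ≠ C 4 := by rw [hp, hq]; exact hyz.symm
  have hpr : C 3 ≠ C 5 := by rw [hp, hr]; exact hxz.symm
  have hqr : C 4 ≠ C 5 := by rw [hq, hr]; exact hxy.symm
  exact h 6 5 (by simp [G3]) (third hpq hpr hqr (h 6 3 (by simp [G3])) (h 6 4 (by simp [G3])))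

theorem G3_deleteEdges_colorable_three (e : Sym2 (Fin 7)) (he : e ∈ G3.edgeSet) :
    (G3.deleteEdges {e}).Colorable 3 := by
  rw [G3, edgeSet_fromEdgeSet, Set.mem_sdiff] at he
  rw [G3, fromEdgeSet_deleteEdges]
  simp only [Set.mem_insert_iff, Set.mem_singleton_iff] at he
  rcases he with ⟨rfl | rfl | rfl | rfl | rfl | rfl | rfl | rfl | rfl | rfl | rfl | rfl, -⟩
  · exact colorable_fromEdgeSet_of_forall_ne ![0, 0, 1, 1, 2, 2, 0] (by decide)
  · exact colorable_fromEdgeSet_of_forall_ne ![0, 1, 0, 2, 1, 2, 0] (by decide)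
  · exact colorable_fromEdgeSet_of_forall_ne ![0, 1, 1, 2, 2, 0, 1] (by decide)
  · exact colorable_fromEdgeSet_of_forall_ne ![0, 1, 2, 0, 1, 0, 2] (by decide)
  · exact colorable_fromEdgeSet_of_forall_ne ![0, 1, 2, 1, 1, 0, 2] (by decide)
  · exact colorable_fromEdgeSet_of_forall_ne ![0, 1, 2, 2, 0, 0, 1] (by decide)
  · exact colorable_fromEdgeSet_of_forall_ne ![0, 1, 2, 2, 2, 0, 1] (by decide)
  · exact colorable_fromEdgeSet_of_forall_ne ![0, 1, 2, 2, 1, 1, 0] (by decide)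
  · exact colorable_fromEdgeSet_of_forall_ne ![0, 1, 2, 2, 1, 2, 0] (by decide)
  · exact colorable_fromEdgeSet_of_forall_ne ![0, 1, 2, 2, 1, 0, 2] (by decide)
  · exact colorable_fromEdgeSet_of_forall_ne ![0, 1, 2, 2, 1, 0, 1] (by decide)
  · exact colorable_fromEdgeSet_of_forall_ne ![0, 1, 2, 2, 1, 0, 0] (by decide)

/-- The graph `G₃` is `4`-critical: it has chromatic number `4`, and deleting any single
edge yields a graph with chromatic number at most `3`. -/
theorem G3_four_critical :
    G3.chromaticNumber = 4 ∧
      ∀ e ∈ G3.edgeSet, (G3.deleteEdges {e}).chromaticNumber ≤ 3 :=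
  ⟨chromaticNumber_eq_iff_colorable_not_colorable.2
      ⟨G3_colorable_four, G3_not_colorable_three⟩,
    fun e he => chromaticNumber_le_iff_colorable.2 (G3_deleteEdges_colorable_three e he)⟩
end

section
/- The complete bipartite graph K_{3,3} is not a minor of the graph G_3. (Together with the fact that K_{3,3}^- is a minor of G_3, this gives G_3 the minor bracket ⟨K_{3,3}^-, K_{3,3}⟩.) -/
/-- `H` is a minor of `G`: there are disjoint connected branch sets in `G`, one for each
vertex of `H`, such that every edge of `H` is realized by an edge of `G` between the
corresponding branch sets. -/
def IsMinor {β α : Type*} (H : SimpleGraph β) (G : SimpleGraph α) : Prop :=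
  ∃ f : α → Option β,
    (∀ b : β, ∃ a : α, f a = some b) ∧
    (∀ b : β, (G.induce {a : α | f a = some b}).Connected) ∧
    (∀ b₁ b₂ : β, H.Adj b₁ b₂ →
      ∃ a₁ a₂ : α, f a₁ = some b₁ ∧ f a₂ = some b₂ ∧ G.Adj a₁ a₂)

open Finset Function

/-- Adjacency of `a` and `b` in `G` after the vertex `e` has been merged into `u`. -/
def SimpleGraph.MergeAdj {α : Type*} (G : SimpleGraph α) (e u a b : α) : Prop :=
  G.Adj a b ∨ (a = u ∧ G.Adj e b) ∨ (b = u ∧ G.Adj a e)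

instance {α : Type*} [DecidableEq α] (G : SimpleGraph α) [DecidableRel G.Adj] (e u : α) :
    DecidableRel (G.MergeAdj e u) :=
  fun _ _ => inferInstanceAs (Decidable (_ ∨ _))

theorem IsMinor.exists_embedding_mergeAdj {α β : Type*} [Fintype α] [Fintype β]
    {H : SimpleGraph β} {G : SimpleGraph α} (h : IsMinor H G)
    (hcard : Fintype.card α = Fintype.card β + 1) :
    ∃ (g : β ↪ α) (e u : α), Set.range g = {e}ᶜ ∧
      ∀ b₁ b₂, H.Adj b₁ b₂ → G.MergeAdj e u (g b₁) (g b₂) := by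
  obtain ⟨f, hsurj, -, hedge⟩ := h
  choose g hg using hsurj
  have g_inj : Injective g := fun b₁ b₂ h => Option.some_injective _ (by rw [← hg, ← hg, h])
  obtain ⟨e, he⟩ : ∃ e, (Set.range g)ᶜ = {e} := by
    refine Set.ncard_eq_one.mp ?_
    rw [Set.ncard_compl, Set.ncard_range_of_injective g_inj, Nat.card_eq_fintype_card,
      Nat.card_eq_fintype_card, hcard, Nat.add_sub_cancel_left]
  have fiber : ∀ a b, f a = some b → a = g b ∨ a = e := by
    intro a b hab
    by_cases ha : a ∈ Set.range g
    · obtain ⟨b', rfl⟩ := ha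
      exact .inl (congrArg g (Option.some_injective _ ((hg b').symm.trans hab)))
    · exact .inr (Set.mem_singleton_iff.mp (he ▸ (ha : a ∈ (Set.range g)ᶜ)))
  -- `u` represents the branch set containing `e`; it is `e` itself if there is none.
  refine ⟨⟨g, g_inj⟩, e, (f e).elim e g, (compl_eq_comm.mp he).symm, fun b₁ b₂ hb => ?_⟩
  obtain ⟨a₁, a₂, h₁, h₂, hadj⟩ := hedge b₁ b₂ hb
  rcases fiber a₁ b₁ h₁ with rfl | rfl <;> rcases fiber a₂ b₂ h₂ with rfl | rfl
  · exact .inl hadj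
  · exact .inr (.inr ⟨by simp [h₂], hadj⟩)
  · exact .inr (.inl ⟨by simp [h₁], hadj⟩)
  · exact (G.irrefl hadj).elim

theorem G3_adj_iff {a b : Fin 7} : G3.Adj a b ↔
    s(a, b) ∈ ({s(0, 1), s(0, 2), s(1, 2), s(3, 0), s(3, 1), s(4, 0), s(4, 2),
      s(5, 1), s(5, 2), s(6, 3), s(6, 4), s(6, 5)} : Finset (Sym2 (Fin 7))) ∧ a ≠ b := by
  simp only [G3, SimpleGraph.fromEdgeSet_adj, ← coe_insert, ← coe_singleton, mem_coe]

instance inst_s8 : DecidableRel G3.Adj := fun _ _ => decidable_of_iff' _ G3_adj_iff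

theorem G3_not_mergeAdj_K33 : ∀ e u : Fin 7, ∀ L ∈ (univ.erase e).powersetCard 3,
    ∃ l ∈ L, ∃ r, r ≠ e ∧ r ∉ L ∧ ¬ G3.MergeAdj e u l r := by
  decide +kernel

/-- The complete bipartite graph `K₃,₃` is not a minor of `G₃`. -/
theorem K33_not_isMinor_G3 :
    ¬ IsMinor (completeBipartiteGraph (Fin 3) (Fin 3)) G3 := by
  intro h
  obtain ⟨g, e, u, hrange, hadj⟩ := h.exists_embedding_mergeAdj (by simp)
  have hleft : univ.image (g ∘ Sum.inl) ∈ (univ.erase e).powersetCard 3 := by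
    refine mem_powersetCard.mpr ⟨fun a ha => ?_, ?_⟩
    · obtain ⟨i, -, rfl⟩ := mem_image.mp ha
      exact mem_erase.mpr ⟨Set.ext_iff.mp hrange _ |>.mp ⟨_, rfl⟩, mem_univ _⟩
    · rw [card_image_of_injective _ (g.injective.comp Sum.inl_injective), card_fin]
  obtain ⟨l, hl, r, hre, hrL, hnot⟩ := G3_not_mergeAdj_K33 e u _ hleft
  obtain ⟨i, -, rfl⟩ := mem_image.mp hl
  obtain ⟨b, rfl⟩ : r ∈ Set.range g := hrange ▸ hre
  cases b with
  | inl i' => exact hrL (mem_image_of_mem _ (mem_univ i'))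
  | inr j => exact hnot (hadj _ _ (by simp))
end

section
/- For every natural number n ≥ 5, the graph K_5 minus one edge (K_5^-) is not a minor of the wheel graph W_n. (Together with the fact that W_4 is a minor of W_n, this gives W_n the minor bracket ⟨W_4, K_5^-⟩.) -/
/-- The wheel graph `W n`: hub vertex `0` joined to a rim cycle on vertices `1, …, n`. -/
def wheelGraph (n : ℕ) : SimpleGraph (Fin (n + 1)) :=
  SimpleGraph.fromRel (fun i j =>
    (i = 0 ∧ j ≠ 0) ∨ (i ≠ 0 ∧ j ≠ 0 ∧ (j : ℕ) = (i : ℕ) % n + 1))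

/-- `K₅` with one edge removed. -/
def K5minus : SimpleGraph (Fin 5) :=
  (SimpleGraph.completeGraph (Fin 5)).deleteEdges {s(0, 1)}

/-!
The hub of `W n` lies in at most one branch set, and however one vertex `e` of `K₅⁻` is chosen,
some other vertex `b` has three neighbours different from `e`. So the branch set of `b` is a
connected set of rim vertices with three distinct rim neighbours outside it. A connected proper
subset of a cycle is an arc, with at most two outside neighbours: measured by the forward offset
from one outside neighbour `c₁`, the arc fills an interval of `[1, n - 1]` that reaches `1` or
`n - 1` (it is adjacent to `c₁`), so the other two neighbours both sit just past its other end.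
-/

namespace SimpleGraph

variable {V : Type*} {G : SimpleGraph V}

theorem Walk.exists_mem_support_apply_eq (φ : V → ℕ) (hφ : ∀ x y, G.Adj x y → φ y ≤ φ x + 1)
    {u v : V} (p : G.Walk u v) {m : ℕ} (hu : φ u ≤ m) (hv : m ≤ φ v) :
    ∃ z ∈ p.support, φ z = m := by
  induction p with
  | nil => exact ⟨_, List.mem_singleton_self _, by omega⟩
  | @cons u w v huw p ih =>
    by_cases hm : φ u = m
    · exact ⟨u, p.support.mem_cons_self, hm⟩
    · obtain ⟨z, hz, hzm⟩ := ih (by have := hφ u w huw; omega) hv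
      exact ⟨z, List.mem_cons_of_mem _ hz, hzm⟩

theorem Preconnected.exists_apply_eq (hG : G.Preconnected) (φ : V → ℕ)
    (hφ : ∀ x y, G.Adj x y → φ y ≤ φ x + 1) {u v : V} {m : ℕ} (hu : φ u ≤ m) (hv : m ≤ φ v) :
    ∃ z, φ z = m :=
  let ⟨z, _, hz⟩ := (hG u v).some.exists_mem_support_apply_eq φ hφ hu hv
  ⟨z, hz⟩

end SimpleGraph

section Wheel

variable {n : ℕ}

theorem wheelGraph_adj_of_ne_zero {x y : Fin (n + 1)} (hx : x ≠ 0) (hy : y ≠ 0)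
    (h : (wheelGraph n).Adj x y) :
    (y : ℕ) = x + 1 ∨ (x : ℕ) = y + 1 ∨
      ((x : ℕ) = n ∧ (y : ℕ) = 1) ∨ ((y : ℕ) = n ∧ (x : ℕ) = 1) := by
  have hmod : ∀ z : Fin (n + 1), z ≠ 0 → (z : ℕ) % n = if (z : ℕ) = n then 0 else (z : ℕ) := by
    intro z hz
    have := Fin.val_ne_zero_iff.2 hz
    split_ifs with hzn
    · simp [hzn]
    · exact Nat.mod_eq_of_lt (by omega)
  have hxy : (x : ℕ) ≠ y := Fin.val_ne_iff.2 h.ne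
  have hrim : (y : ℕ) = x % n + 1 ∨ (x : ℕ) = y % n + 1 := by
    simp only [wheelGraph, SimpleGraph.fromRel_adj] at h
    tauto
  rw [hmod x hx, hmod y hy] at hrim
  split_ifs at hrim <;> omega

/-- For rim vertices `c` and `x`, the number `(x - c) mod n` of rim steps from `c` forward
to `x`. -/
def rimOffset (c x : Fin (n + 1)) : ℕ := if (c : ℕ) ≤ x then (x : ℕ) - c else (x : ℕ) + n - c

variable {c x y : Fin (n + 1)}

theorem rimOffset_lt (hc : c ≠ 0) : rimOffset c x < n := by
  have := Fin.val_ne_zero_iff.2 hc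
  unfold rimOffset; split_ifs <;> omega

theorem rimOffset_pos (hx : x ≠ 0) (hxc : x ≠ c) : 0 < rimOffset c x := by
  have := Fin.val_ne_zero_iff.2 hx
  have := Fin.val_ne_iff.2 hxc
  unfold rimOffset; split_ifs <;> omega

theorem eq_of_rimOffset_eq (hc : c ≠ 0) (hx : x ≠ 0) (hy : y ≠ 0)
    (h : rimOffset c x = rimOffset c y) : x = y := by
  have := Fin.val_ne_zero_iff.2 hc
  have := Fin.val_ne_zero_iff.2 hx
  have := Fin.val_ne_zero_iff.2 hy
  unfold rimOffset at h
  ext; split_ifs at h <;> omega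

theorem rimOffset_eq_add_one_or_of_adj (hc : c ≠ 0) (hx : x ≠ 0) (hy : y ≠ 0) (hxc : x ≠ c)
    (hyc : y ≠ c) (h : (wheelGraph n).Adj x y) :
    rimOffset c y = rimOffset c x + 1 ∨ rimOffset c x = rimOffset c y + 1 := by
  have := Fin.val_ne_zero_iff.2 hc
  have := Fin.val_ne_iff.2 hxc
  have := Fin.val_ne_iff.2 hyc
  have := wheelGraph_adj_of_ne_zero hx hy h
  unfold rimOffset; split_ifs <;> omega

theorem rimOffset_eq_one_or_of_adj (hc : c ≠ 0) (hx : x ≠ 0) (h : (wheelGraph n).Adj x c) :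
    rimOffset c x = 1 ∨ rimOffset c x = n - 1 := by
  have := wheelGraph_adj_of_ne_zero hx hc h
  unfold rimOffset; split_ifs <;> omega

theorem rimOffset_lt_forall_or_forall_lt {S : Set (Fin (n + 1))} (h0 : 0 ∉ S)
    (hS : ((wheelGraph n).induce S).Preconnected) (hc : c ≠ 0) (hcS : c ∉ S)
    (hx : x ≠ 0) (hxS : x ∉ S) :
    (∀ s ∈ S, rimOffset c s < rimOffset c x) ∨ (∀ s ∈ S, rimOffset c x < rimOffset c s) := by
  have hS0 : ∀ s ∈ S, s ≠ 0 := fun s hs h => h0 (h ▸ hs)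
  have hSc : ∀ s ∈ S, s ≠ c := fun s hs h => hcS (h ▸ hs)
  by_contra! ⟨⟨s, hs, hsx⟩, ⟨t, ht, hxt⟩⟩
  obtain ⟨z, hz⟩ := hS.exists_apply_eq (fun z : S => rimOffset c z)
    (fun y z hyz => by
      have := rimOffset_eq_add_one_or_of_adj hc (hS0 _ y.2) (hS0 _ z.2) (hSc _ y.2) (hSc _ z.2)
        hyz
      omega)
    (u := ⟨t, ht⟩) (v := ⟨s, hs⟩) hxt hsx
  exact hxS (eq_of_rimOffset_eq hc (hS0 _ z.2) hx hz ▸ z.2)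

theorem wheelGraph_rim_neighbor_eq {S : Set (Fin (n + 1))} (h0 : 0 ∉ S)
    (hS : ((wheelGraph n).induce S).Preconnected) {c₁ c₂ c₃ : Fin (n + 1)}
    (hc₁ : c₁ ≠ 0) (hc₂ : c₂ ≠ 0) (hc₃ : c₃ ≠ 0) (hc₁S : c₁ ∉ S) (hc₂S : c₂ ∉ S) (hc₃S : c₃ ∉ S)
    (h₁₂ : c₁ ≠ c₂) (h₁₃ : c₁ ≠ c₃) (hadj₁ : ∃ s ∈ S, (wheelGraph n).Adj s c₁)
    (hadj₂ : ∃ s ∈ S, (wheelGraph n).Adj s c₂) (hadj₃ : ∃ s ∈ S, (wheelGraph n).Adj s c₃) :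
    c₂ = c₃ := by
  obtain ⟨s₁, hs₁, hsc₁⟩ := hadj₁
  obtain ⟨s₂, hs₂, hsc₂⟩ := hadj₂
  obtain ⟨s₃, hs₃, hsc₃⟩ := hadj₃
  have hS0 : ∀ s ∈ S, s ≠ 0 := fun s hs h => h0 (h ▸ hs)
  have hSc : ∀ s ∈ S, s ≠ c₁ := fun s hs h => hc₁S (h ▸ hs)
  refine eq_of_rimOffset_eq hc₁ hc₂ hc₃ ?_
  have h₁ := rimOffset_eq_one_or_of_adj hc₁ (hS0 _ hs₁) hsc₁
  have h₂ := rimOffset_eq_add_one_or_of_adj hc₁ (hS0 _ hs₂) hc₂ (hSc _ hs₂) h₁₂.symm hsc₂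
  have h₃ := rimOffset_eq_add_one_or_of_adj hc₁ (hS0 _ hs₃) hc₃ (hSc _ hs₃) h₁₃.symm hsc₃
  have := rimOffset_pos hc₂ h₁₂.symm
  have := rimOffset_pos hc₃ h₁₃.symm
  have := rimOffset_lt (x := c₂) hc₁
  have := rimOffset_lt (x := c₃) hc₁
  rcases rimOffset_lt_forall_or_forall_lt h0 hS hc₁ hc₁S hc₂ hc₂S with h₂' | h₂' <;>
  rcases rimOffset_lt_forall_or_forall_lt h0 hS hc₁ hc₁S hc₃ hc₃S with h₃' | h₃' <;>
  · have := h₂' _ hs₁; have := h₂' _ hs₂; have := h₂' _ hs₃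
    have := h₃' _ hs₁; have := h₃' _ hs₂; have := h₃' _ hs₃
    omega

end Wheel

theorem K5minus_adj {i j : Fin 5} :
    K5minus.Adj i j ↔ i ≠ j ∧ ¬((i = 0 ∧ j = 1) ∨ (i = 1 ∧ j = 0)) := by
  simp [K5minus]

theorem K5minus_exists_three_adj_of_ne (e : Fin 5) : ∃ b b₁ b₂ b₃ : Fin 5,
    b ≠ e ∧ b₁ ≠ e ∧ b₂ ≠ e ∧ b₃ ≠ e ∧ b₁ ≠ b₂ ∧ b₁ ≠ b₃ ∧ b₂ ≠ b₃ ∧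
    K5minus.Adj b b₁ ∧ K5minus.Adj b b₂ ∧ K5minus.Adj b b₃ := by
  simp only [K5minus_adj]
  fin_cases e
  · exact ⟨2, 1, 3, 4, by decide⟩
  · exact ⟨2, 0, 3, 4, by decide⟩
  · exact ⟨3, 0, 1, 4, by decide⟩
  · exact ⟨2, 0, 1, 4, by decide⟩
  · exact ⟨2, 0, 1, 3, by decide⟩

theorem K5minus_not_isMinor_wheelGraph_general (n : ℕ) :
    ¬ IsMinor K5minus (wheelGraph n) := by
  rintro ⟨f, -, hconn, hedge⟩
  obtain ⟨b, b₁, b₂, b₃, hb, hb₁, hb₂, hb₃, h₁₂, h₁₃, h₂₃, hbb₁, hbb₂, hbb₃⟩ :=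
    K5minus_exists_three_adj_of_ne ((f 0).getD 0)
  have hub : ∀ {i : Fin 5}, i ≠ (f 0).getD 0 → f 0 ≠ some i := by
    rintro i hi h
    simp [h] at hi
  have hne : ∀ {x y : Fin (n + 1)} {i j : Fin 5}, f x = some i → f y = some j → i ≠ j →
      x ≠ y := by
    rintro x y i j hx hy hij rfl
    exact hij (Option.some_injective _ (hx.symm.trans hy))
  obtain ⟨s₁, c₁, hs₁, hc₁, hsc₁⟩ := hedge b b₁ hbb₁
  obtain ⟨s₂, c₂, hs₂, hc₂, hsc₂⟩ := hedge b b₂ hbb₂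
  obtain ⟨s₃, c₃, hs₃, hc₃, hsc₃⟩ := hedge b b₃ hbb₃
  exact hne hc₂ hc₃ h₂₃ (wheelGraph_rim_neighbor_eq (hub hb) (hconn b).preconnected
    (fun h => hub hb₁ (h ▸ hc₁)) (fun h => hub hb₂ (h ▸ hc₂)) (fun h => hub hb₃ (h ▸ hc₃))
    (hne hc₁ · hbb₁.ne.symm rfl) (hne hc₂ · hbb₂.ne.symm rfl) (hne hc₃ · hbb₃.ne.symm rfl)
    (hne hc₁ hc₂ h₁₂) (hne hc₁ hc₃ h₁₃) ⟨s₁, hs₁, hsc₁⟩ ⟨s₂, hs₂, hsc₂⟩ ⟨s₃, hs₃, hsc₃⟩)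

/-- For every `n ≥ 5`, the graph `K₅⁻` is not a minor of the wheel `W n`. -/
theorem K5minus_not_isMinor_wheelGraph (n : ℕ) (hn : 5 ≤ n) :
    ¬ IsMinor K5minus (wheelGraph n) :=
  K5minus_not_isMinor_wheelGraph_general n
end
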